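/- Strong normalization: every term typable in the simply typed distributive λ-calculus (with typing up to the distributivity isomorphism) is strongly normalizing with respect to the distributive reduction. -/

import Mathlib

inductive Tm : Type
| var : ℕ → Tm
| lam : Tm → Tm
| app : Tm → Tm → Tm
| pair : Tm → Tm → Tm
| p1 : Tm → Tm
| p2 : Tm → Tm

namespace Tm

/-- Renaming of de Bruijn indices. -/
def rename (f : ℕ → ℕ) : Tm → Tm
| var n => var (f n)
| lam t => lam (t.rename (fun n => match n with | 0 => 0 | n+1 => f n + 1))
| app t s => app (t.rename f) (s.rename f)
| pair t s => pair (t.rename f) (s.rename f)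
| p1 t => p1 (t.rename f)
| p2 t => p2 (t.rename f)

/-- Capture-avoiding simultaneous substitution. -/
def subst (σ : ℕ → Tm) : Tm → Tm
| var n => σ n
| lam t => lam (t.subst (fun n => match n with | 0 => var 0 | n+1 => (σ n).rename Nat.succ))
| app t s => app (t.subst σ) (s.subst σ)
| pair t s => pair (t.subst σ) (s.subst σ)
| p1 t => p1 (t.subst σ)
| p2 t => p2 (t.subst σ)

/-- Substitution of the single (outermost) free variable: t[x := s]. -/
def subst1 (t s : Tm) : Tm :=
  t.subst (fun n => match n with | 0 => s | n+1 => var n)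

/-- One-step reduction of the distributive λ-calculus. -/
inductive Step : Tm → Tm → Prop
| beta (t s) : Step (app (lam t) s) (t.subst1 s)
| proj1 (t1 t2) : Step (p1 (pair t1 t2)) t1
| proj2 (t1 t2) : Step (p2 (pair t1 t2)) t2
| pairApp (t s u) : Step (app (pair t s) u) (pair (app t u) (app s u))
| projLam1 (t) : Step (p1 (lam t)) (lam (p1 t))
| projLam2 (t) : Step (p2 (lam t)) (lam (p2 t))
| lam_cong {t t'} : Step t t' → Step (lam t) (lam t')
| appL {t t' s} : Step t t' → Step (app t s) (app t' s)
| appR {t s s'} : Step s s' → Step (app t s) (app t s')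
| pairL {t t' s} : Step t t' → Step (pair t s) (pair t' s)
| pairR {t s s'} : Step s s' → Step (pair t s) (pair t s')
| p1_cong {t t'} : Step t t' → Step (p1 t) (p1 t')
| p2_cong {t t'} : Step t t' → Step (p2 t) (p2 t')

/-- Many-step reduction. -/
def Steps : Tm → Tm → Prop := Relation.ReflTransGen Step

/-- A term is normal when no rule applies anywhere in it. -/
def Normal (t : Tm) : Prop := ¬ ∃ s, Step t s

/-- All free variables are < k. -/
def closedUnder : ℕ → Tm → Prop
| k, var n => n < k
| k, lam t => closedUnder (k+1) t
| k, app t s => closedUnder k t ∧ closedUnder k s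
| k, pair t s => closedUnder k t ∧ closedUnder k s
| k, p1 t => closedUnder k t
| k, p2 t => closedUnder k t

def Closed (t : Tm) : Prop := closedUnder 0 t

/-- Values: variables, abstractions, pairs. -/
def IsValue : Tm → Prop
| var _ => True
| lam _ => True
| pair _ _ => True
| _ => False

/-- Neutral terms: variables, applications, projections. -/
def Neutral : Tm → Prop
| var _ => True
| app _ _ => True
| p1 _ => True
| p2 _ => True
| _ => False

/-- Strong normalization: every reduction sequence is finite. -/
def SN (t : Tm) : Prop := Acc (fun a b => Step b a) t

end Tm

inductive Ty : Type
| base : Ty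
| arr : Ty → Ty → Ty
| conj : Ty → Ty → Ty

/-- The least congruence containing distributivity A ⇒ (B ∧ C) ≡ (A ⇒ B) ∧ (A ⇒ C). -/
inductive Iso : Ty → Ty → Prop
| refl (A) : Iso A A
| symm {A B} : Iso A B → Iso B A
| trans {A B C} : Iso A B → Iso B C → Iso A C
| distr (A B C) : Iso (Ty.arr A (Ty.conj B C)) (Ty.conj (Ty.arr A B) (Ty.arr A C))
| arrL {A C} (B) : Iso A C → Iso (Ty.arr A B) (Ty.arr C B)
| arrR {B C} (A) : Iso B C → Iso (Ty.arr A B) (Ty.arr A C)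
| conjL {A C} (B) : Iso A C → Iso (Ty.conj A B) (Ty.conj C B)
| conjR {B C} (A) : Iso B C → Iso (Ty.conj A B) (Ty.conj A C)

/-- Typing, with contexts as lists of types (de Bruijn), including the conversion rule for ≡. -/
inductive Typing : List Ty → Tm → Ty → Prop
| var {Γ n A} : Γ[n]? = some A → Typing Γ (Tm.var n) A
| lam {Γ t A B} : Typing (A :: Γ) t B → Typing Γ (Tm.lam t) (Ty.arr A B)
| app {Γ t s A B} : Typing Γ t (Ty.arr A B) → Typing Γ s A → Typing Γ (Tm.app t s) B
| pair {Γ t s A B} : Typing Γ t A → Typing Γ s B → Typing Γ (Tm.pair t s) (Ty.conj A B)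
| p1 {Γ t A B} : Typing Γ t (Ty.conj A B) → Typing Γ (Tm.p1 t) A
| p2 {Γ t A B} : Typing Γ t (Ty.conj A B) → Typing Γ (Tm.p2 t) B
| iso {Γ t A B} : Typing Γ t A → Iso A B → Typing Γ t B

/-- Reducibility interpretation of types. -/
def Red : Ty → Tm → Prop
| Ty.base, t => Tm.SN t
| Ty.arr A B, t => ∀ s, Red A s → Red B (Tm.app t s)
| Ty.conj A B, t => Red A (Tm.p1 t) ∧ Red B (Tm.p2 t)

/-!
Tait–Girard reducibility candidates: sets of strongly normalizing terms closed under reduction and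
under neutral expansion. The rules `⟨t,s⟩u → ⟨tu,su⟩` and `πᵢ(λx.t) → λx.πᵢt` are exactly what makes
the candidate interpretation validate distributivity on the nose,
`Arrow RA (Conj RB RC) = Conj (Arrow RA RB) (Arrow RA RC)`. Hence `Red` is invariant under `≡`, the
conversion rule is sound for reducibility, and the usual fundamental lemma goes through.
-/

namespace Tm

def liftR (f : ℕ → ℕ) : ℕ → ℕ := fun n => match n with | 0 => 0 | n+1 => f n + 1

def scons (s : Tm) (σ : ℕ → Tm) : ℕ → Tm := fun n => match n with | 0 => s | n+1 => σ n

def liftS (σ : ℕ → Tm) : ℕ → Tm := scons (var 0) fun n => (σ n).rename Nat.succ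

theorem rename_lam (f : ℕ → ℕ) (t : Tm) : (lam t).rename f = lam (t.rename (liftR f)) := rfl

theorem subst_lam (σ : ℕ → Tm) (t : Tm) : (lam t).subst σ = lam (t.subst (liftS σ)) := rfl

theorem subst1_eq_subst (t s : Tm) : t.subst1 s = t.subst (scons s var) := rfl

theorem rename_rename (t : Tm) (f g : ℕ → ℕ) : (t.rename f).rename g = t.rename (g ∘ f) := by
  induction t generalizing f g with
  | lam t ih =>
    rw [rename_lam, rename_lam, rename_lam, ih]
    congr 2
    funext n
    cases n <;> rfl
  | _ => simp_all [rename]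

theorem subst_rename (t : Tm) (f : ℕ → ℕ) (σ : ℕ → Tm) :
    (t.rename f).subst σ = t.subst (σ ∘ f) := by
  induction t generalizing f σ with
  | lam t ih =>
    rw [rename_lam, subst_lam, subst_lam, ih]
    congr 2
    funext n
    cases n <;> rfl
  | _ => simp_all [rename, subst]

theorem rename_subst (t : Tm) (σ : ℕ → Tm) (f : ℕ → ℕ) :
    (t.subst σ).rename f = t.subst fun n => (σ n).rename f := by
  induction t generalizing σ f with
  | lam t ih =>
    rw [subst_lam, rename_lam, subst_lam, ih]
    congr 2
    funext n
    cases n with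
    | zero => rfl
    | succ n =>
      show ((σ n).rename Nat.succ).rename (liftR f) = ((σ n).rename f).rename Nat.succ
      rw [rename_rename, rename_rename]
      rfl
  | _ => simp_all [rename, subst]

theorem subst_subst (t : Tm) (σ τ : ℕ → Tm) :
    (t.subst σ).subst τ = t.subst fun n => (σ n).subst τ := by
  induction t generalizing σ τ with
  | lam t ih =>
    rw [subst_lam, subst_lam, subst_lam, ih]
    congr 2
    funext n
    cases n with
    | zero => rfl
    | succ n => exact (subst_rename _ _ _).trans (rename_subst _ _ _).symm
  | _ => simp_all [subst]

theorem subst_var (t : Tm) : t.subst var = t := by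
  induction t with
  | lam t ih =>
    rw [subst_lam, show liftS var = var from funext fun n => by cases n <;> rfl, ih]
  | _ => simp_all [subst]

theorem subst_liftS_subst1 (t s : Tm) (σ : ℕ → Tm) :
    (t.subst (liftS σ)).subst1 s = t.subst (scons s σ) := by
  rw [subst1_eq_subst, subst_subst]
  congr 1
  funext n
  cases n with
  | zero => rfl
  | succ n => exact (subst_rename _ _ _).trans (subst_var _)

theorem subst1_subst (t s : Tm) (σ : ℕ → Tm) :
    (t.subst1 s).subst σ = (t.subst (liftS σ)).subst1 (s.subst σ) := by
  rw [subst_liftS_subst1, subst1_eq_subst, subst_subst]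
  congr 1
  funext n
  cases n <;> rfl

theorem subst1_rename (t s : Tm) (f : ℕ → ℕ) :
    (t.subst1 s).rename f = (t.rename (liftR f)).subst1 (s.rename f) := by
  rw [subst1_eq_subst, subst1_eq_subst, rename_subst, subst_rename]
  congr 1
  funext n
  cases n <;> rfl

theorem Step.rename {t t' : Tm} (h : Step t t') (f : ℕ → ℕ) : Step (t.rename f) (t'.rename f) := by
  induction h generalizing f with
  | beta t s => rw [subst1_rename]; exact .beta _ _
  | proj1 => exact .proj1 _ _
  | proj2 => exact .proj2 _ _
  | pairApp => exact .pairApp _ _ _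
  | projLam1 => exact .projLam1 _
  | projLam2 => exact .projLam2 _
  | lam_cong _ ih => exact .lam_cong (ih _)
  | appL _ ih => exact .appL (ih _)
  | appR _ ih => exact .appR (ih _)
  | pairL _ ih => exact .pairL (ih _)
  | pairR _ ih => exact .pairR (ih _)
  | p1_cong _ ih => exact .p1_cong (ih _)
  | p2_cong _ ih => exact .p2_cong (ih _)

theorem Step.subst {t t' : Tm} (h : Step t t') (σ : ℕ → Tm) : Step (t.subst σ) (t'.subst σ) := by
  induction h generalizing σ with
  | beta t s => rw [subst1_subst]; exact .beta _ _
  | proj1 => exact .proj1 _ _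
  | proj2 => exact .proj2 _ _
  | pairApp => exact .pairApp _ _ _
  | projLam1 => exact .projLam1 _
  | projLam2 => exact .projLam2 _
  | lam_cong _ ih => exact .lam_cong (ih _)
  | appL _ ih => exact .appL (ih _)
  | appR _ ih => exact .appR (ih _)
  | pairL _ ih => exact .pairL (ih _)
  | pairR _ ih => exact .pairR (ih _)
  | p1_cong _ ih => exact .p1_cong (ih _)
  | p2_cong _ ih => exact .p2_cong (ih _)

theorem Steps.map {g : Tm → Tm} (hg : ∀ {a b}, Step a b → Step (g a) (g b)) {a b : Tm}
    (h : Steps a b) : Steps (g a) (g b) :=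
  Relation.ReflTransGen.lift g (fun _ _ => hg) a b h

theorem steps_subst (t : Tm) {σ σ' : ℕ → Tm} (h : ∀ n, Steps (σ n) (σ' n)) :
    Steps (t.subst σ) (t.subst σ') := by
  induction t generalizing σ σ' with
  | var n => exact h n
  | lam t ih =>
    refine Steps.map Step.lam_cong (ih fun n => ?_)
    cases n with
    | zero => exact .refl
    | succ n => exact Steps.map (Step.rename · _) (h n)
  | app t s iht ihs => exact (Steps.map Step.appL (iht h)).trans (Steps.map Step.appR (ihs h))
  | pair t s iht ihs => exact (Steps.map Step.pairL (iht h)).trans (Steps.map Step.pairR (ihs h))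
  | p1 t ih => exact Steps.map Step.p1_cong (ih h)
  | p2 t ih => exact Steps.map Step.p2_cong (ih h)

theorem steps_subst1 (t : Tm) {s s' : Tm} (h : Step s s') : Steps (t.subst1 s) (t.subst1 s') :=
  steps_subst t fun
    | 0 => .single h
    | _ + 1 => .refl

theorem SN.of_map {g : Tm → Tm} (hg : ∀ {a b}, Step a b → Step (g a) (g b)) {t : Tm}
    (h : SN (g t)) : SN t := by
  generalize hu : g t = u at h
  induction h generalizing t with
  | intro u _ ih => exact ⟨_, fun t' ht' => ih _ (hu ▸ hg ht') rfl⟩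

theorem SN.induction₂ {P : Tm → Tm → Prop} {t s : Tm} (ht : SN t) (hs : SN s)
    (ih : ∀ t s, SN s → (∀ t', Step t t' → P t' s) → (∀ s', Step s s' → P t s') → P t s) :
    P t s := by
  induction ht generalizing s with
  | intro t _ iht =>
    induction hs with
    | intro s hs ihs => exact ih t s ⟨s, hs⟩ (fun t' h => iht t' h ⟨s, hs⟩) ihs

structure IsCandidate (R : Tm → Prop) : Prop where
  sn {t : Tm} : R t → SN t
  step {t t' : Tm} : R t → Step t t' → R t'
  neutral {t : Tm} : Neutral t → (∀ t', Step t t' → R t') → R t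

def Arrow (RA RB : Tm → Prop) (t : Tm) : Prop := ∀ s, RA s → RB (app t s)

def Conj (RA RB : Tm → Prop) (t : Tm) : Prop := RA (p1 t) ∧ RB (p2 t)

namespace IsCandidate

variable {R RA RB RC : Tm → Prop}

theorem steps (hR : IsCandidate R) {t t' : Tm} (h : R t) (hs : Steps t t') : R t' := by
  induction hs with
  | refl => exact h
  | tail _ hstep ih => exact hR.step ih hstep

theorem var (hR : IsCandidate R) (n : ℕ) : R (var n) :=
  hR.neutral trivial fun _ h => nomatch h

theorem arrow (hA : IsCandidate RA) (hB : IsCandidate RB) : IsCandidate (Arrow RA RB) where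
  sn h := SN.of_map Step.appL (hB.sn (h _ (hA.var 0)))
  step h hst s hs := hB.step (h s hs) (.appL hst)
  neutral {t} hn h s hs := by
    induction hA.sn hs with
    | intro s _ ihs =>
      refine hB.neutral trivial fun u hu => ?_
      cases hu with
      | beta => exact hn.elim
      | pairApp => exact hn.elim
      | appL h' => exact h _ h' s hs
      | appR h' => exact ihs _ h' (hA.step hs h')

theorem conj (hA : IsCandidate RA) (hB : IsCandidate RB) : IsCandidate (Conj RA RB) where
  sn h := SN.of_map Step.p1_cong (hA.sn h.1)
  step h hst := ⟨hA.step h.1 (.p1_cong hst), hB.step h.2 (.p2_cong hst)⟩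
  neutral hn h := by
    constructor
    · refine hA.neutral trivial fun u hu => ?_
      cases hu with
      | proj1 => exact hn.elim
      | projLam1 => exact hn.elim
      | p1_cong h' => exact (h _ h').1
    · refine hB.neutral trivial fun u hu => ?_
      cases hu with
      | proj2 => exact hn.elim
      | projLam2 => exact hn.elim
      | p2_cong h' => exact (h _ h').2

theorem app_lam (hR : IsCandidate R) {t s : Tm} (hs : SN s) (h : R (t.subst1 s)) :
    R (app (lam t) s) := by
  have ht : SN t := SN.of_map (g := (·.subst1 s)) (Step.subst · _) (hR.sn h)
  refine SN.induction₂ (P := fun t s => R (t.subst1 s) → R (app (lam t) s)) ht hs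
    (fun t s _ iht ihs h => hR.neutral trivial fun u hu => ?_) h
  cases hu with
  | beta => exact h
  | appL h' =>
    cases h' with
    | lam_cong h' => exact iht _ h' (hR.step h (h'.subst _))
  | appR h' => exact ihs _ h' (hR.steps h (steps_subst1 t h'))

theorem conj_pair (hA : IsCandidate RA) (hB : IsCandidate RB) {u v : Tm} (hu : RA u) (hv : RB v) :
    Conj RA RB (pair u v) := by
  refine SN.induction₂ (P := fun u v => RA u → RB v → Conj RA RB (pair u v)) (hA.sn hu) (hB.sn hv)
    (fun u v _ ihu ihv hu hv => ⟨hA.neutral trivial fun w hw => ?_, hB.neutral trivial fun w hw => ?_⟩)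
    hu hv
  · cases hw with
    | proj1 => exact hu
    | p1_cong h =>
      cases h with
      | pairL h => exact (ihu _ h (hA.step hu h) hv).1
      | pairR h => exact (ihv _ h hu (hB.step hv h)).1
  · cases hw with
    | proj2 => exact hv
    | p2_cong h =>
      cases h with
      | pairL h => exact (ihu _ h (hA.step hu h) hv).2
      | pairR h => exact (ihv _ h hu (hB.step hv h)).2

theorem app_proj_of_conj (hB : IsCandidate RB) (hC : IsCandidate RC) {t s : Tm} (ht : SN t)
    (hs : SN s) (h : Conj RB RC (app t s)) : RB (app (p1 t) s) ∧ RC (app (p2 t) s) := by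
  refine SN.induction₂ (P := fun t s => Conj RB RC (app t s) → RB (app (p1 t) s) ∧ RC (app (p2 t) s))
    ht hs (fun t s hs iht ihs h => ?_) h
  have hBC := hB.conj hC
  constructor
  · refine hB.neutral trivial fun u hu => ?_
    cases hu with
    | appL h' =>
      cases h' with
      | proj1 => exact hB.step (hB.step h.1 (.p1_cong (.pairApp _ _ _))) (.proj1 _ _)
      | projLam1 => exact hB.app_lam hs (hB.step h.1 (.p1_cong (.beta _ _)))
      | p1_cong h' => exact (iht _ h' (hBC.step h (.appL h'))).1
    | appR h' => exact (ihs _ h' (hBC.step h (.appR h'))).1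
  · refine hC.neutral trivial fun u hu => ?_
    cases hu with
    | appL h' =>
      cases h' with
      | proj2 => exact hC.step (hC.step h.2 (.p2_cong (.pairApp _ _ _))) (.proj2 _ _)
      | projLam2 => exact hC.app_lam hs (hC.step h.2 (.p2_cong (.beta _ _)))
      | p2_cong h' => exact (iht _ h' (hBC.step h (.appL h'))).2
    | appR h' => exact (ihs _ h' (hBC.step h (.appR h'))).2

theorem conj_of_app_proj (hB : IsCandidate RB) (hC : IsCandidate RC) {t s : Tm} (ht : SN t)
    (hs : SN s) (h : RB (app (p1 t) s) ∧ RC (app (p2 t) s)) : Conj RB RC (app t s) := by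
  refine SN.induction₂ (P := fun t s => RB (app (p1 t) s) ∧ RC (app (p2 t) s) → Conj RB RC (app t s))
    ht hs (fun t s _ iht ihs h => ?_) h
  have ht' : ∀ t', Step t t' → Conj RB RC (app t' s) := fun t' h' =>
    iht t' h' ⟨hB.step h.1 (.appL (.p1_cong h')), hC.step h.2 (.appL (.p2_cong h'))⟩
  have hs' : ∀ s', Step s s' → Conj RB RC (app t s') := fun s' h' =>
    ihs s' h' ⟨hB.step h.1 (.appR h'), hC.step h.2 (.appR h')⟩
  constructor
  · refine hB.neutral trivial fun u hu => ?_
    cases hu with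
    | p1_cong h' =>
      cases h' with
      | beta => exact hB.step (hB.step h.1 (.appL (.projLam1 _))) (.beta _ _)
      | pairApp =>
        exact (hB.conj_pair hC (hB.step h.1 (.appL (.proj1 _ _))) (hC.step h.2 (.appL (.proj2 _ _)))).1
      | appL h' => exact (ht' _ h').1
      | appR h' => exact (hs' _ h').1
  · refine hC.neutral trivial fun u hu => ?_
    cases hu with
    | p2_cong h' =>
      cases h' with
      | beta => exact hC.step (hC.step h.2 (.appL (.projLam2 _))) (.beta _ _)
      | pairApp =>
        exact (hB.conj_pair hC (hB.step h.1 (.appL (.proj1 _ _))) (hC.step h.2 (.appL (.proj2 _ _)))).2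
      | appL h' => exact (ht' _ h').2
      | appR h' => exact (hs' _ h').2

theorem arrow_conj (hA : IsCandidate RA) (hB : IsCandidate RB) (hC : IsCandidate RC) :
    Arrow RA (Conj RB RC) = Conj (Arrow RA RB) (Arrow RA RC) := by
  funext t
  apply propext
  constructor
  · intro h
    have ht : SN t := (hA.arrow (hB.conj hC)).sn h
    exact ⟨fun s hs => (hB.app_proj_of_conj hC ht (hA.sn hs) (h s hs)).1,
      fun s hs => (hB.app_proj_of_conj hC ht (hA.sn hs) (h s hs)).2⟩
  · intro h s hs
    have ht : SN t := ((hA.arrow hB).conj (hA.arrow hC)).sn h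
    exact hB.conj_of_app_proj hC ht (hA.sn hs) ⟨h.1 s hs, h.2 s hs⟩

end IsCandidate

theorem isCandidate_sn : IsCandidate SN where
  sn h := h
  step h hs := h.inv hs
  neutral _ h := ⟨_, h⟩

end Tm

open Tm

theorem isCandidate_red (A : Ty) : IsCandidate (Red A) := by
  induction A with
  | base => exact isCandidate_sn
  | arr A B ihA ihB => exact ihA.arrow ihB
  | conj A B ihA ihB => exact ihA.conj ihB

theorem red_eq_of_iso {A B : Ty} (h : Iso A B) : Red A = Red B := by
  induction h with
  | refl => rfl
  | symm _ ih => exact ih.symm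
  | trans _ _ ih₁ ih₂ => exact ih₁.trans ih₂
  | distr A B C => exact (isCandidate_red A).arrow_conj (isCandidate_red B) (isCandidate_red C)
  | arrL B _ ih => exact congrArg (Arrow · (Red B)) ih
  | arrR A _ ih => exact congrArg (Arrow (Red A)) ih
  | conjL B _ ih => exact congrArg (Conj · (Red B)) ih
  | conjR A _ ih => exact congrArg (Conj (Red A)) ih

theorem Typing.red_subst {Γ : List Ty} {t : Tm} {A : Ty} (h : Typing Γ t A) (σ : ℕ → Tm)
    (hσ : ∀ n B, Γ[n]? = some B → Red B (σ n)) : Red A (t.subst σ) := by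
  induction h generalizing σ with
  | var h => exact hσ _ _ h
  | @lam Γ t A B _ ih =>
    intro s hs
    have hσ' : ∀ n C, (A :: Γ)[n]? = some C → Red C (scons s σ n) := by
      intro n C hn
      cases n with
      | zero => cases hn; exact hs
      | succ n => exact hσ n C hn
    have hred := ih _ hσ'
    rw [← subst_liftS_subst1] at hred
    exact (isCandidate_red B).app_lam ((isCandidate_red A).sn hs) hred
  | app _ _ ih₁ ih₂ => exact ih₁ σ hσ _ (ih₂ σ hσ)
  | @pair Γ t s A B _ _ ih₁ ih₂ =>
    exact (isCandidate_red A).conj_pair (isCandidate_red B) (ih₁ σ hσ) (ih₂ σ hσ)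
  | p1 _ ih => exact (ih σ hσ).1
  | p2 _ ih => exact (ih σ hσ).2
  | iso _ hiso ih => exact red_eq_of_iso hiso ▸ ih σ hσ

theorem strong_normalization (Γ : List Ty) (t : Tm) (A : Ty) (h : Typing Γ t A) :
    Tm.SN t := by
  have hred := h.red_subst var fun n B _ => (isCandidate_red B).var n
  rw [subst_var] at hred
  exact (isCandidate_red A).sn hred
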